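/- arXiv:2105.12452 — 2 statements merged into one kernel-verified Lean document; each statement's English description precedes it below -/
import Mathlib

section
/- Every straight-line RAC drawing of a graph is fan-crossing-free: in a straight-line drawing in which any two crossing edges cross at a right angle, no edge crosses two edges that share a common endpoint. -/
open Set

noncomputable section

/-- A drawing of a simple graph in the plane: vertices are mapped to distinct
points, each edge `uv` is drawn as a simple arc joining the images of `u` and
`v` and avoiding the images of the other vertices, any two arcs meet in
finitely many points, and no three arcs pass through a common non-vertex
point. -/
structure Drawing {V : Type} (G : SimpleGraph V) where
  vpos : V → ℝ × ℝ
  vpos_inj : Function.Injective vpos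
  arc : V → V → ℝ → ℝ × ℝ
  arc_symm : ∀ u v t, arc u v t = arc v u (1 - t)
  arc_cont : ∀ u v, G.Adj u v → ContinuousOn (arc u v) (Set.Icc 0 1)
  arc_injOn : ∀ u v, G.Adj u v → Set.InjOn (arc u v) (Set.Icc 0 1)
  arc_start : ∀ u v, G.Adj u v → arc u v 0 = vpos u
  arc_end : ∀ u v, G.Adj u v → arc u v 1 = vpos v
  arc_avoids : ∀ u v, G.Adj u v → ∀ t ∈ Set.Ioo (0:ℝ) 1, arc u v t ∉ Set.range vpos
  inter_finite : ∀ u v w z, G.Adj u v → G.Adj w z → s(u, v) ≠ s(w, z) →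
    ((arc u v '' Set.Icc 0 1) ∩ (arc w z '' Set.Icc 0 1)).Finite
  no_triple_point : ∀ p : ℝ × ℝ, p ∉ Set.range vpos →
    ∀ u₁ v₁ u₂ v₂ u₃ v₃, G.Adj u₁ v₁ → G.Adj u₂ v₂ → G.Adj u₃ v₃ →
      s(u₁, v₁) ≠ s(u₂, v₂) → s(u₁, v₁) ≠ s(u₃, v₃) → s(u₂, v₂) ≠ s(u₃, v₃) →
      ¬ (p ∈ arc u₁ v₁ '' Set.Icc 0 1 ∧ p ∈ arc u₂ v₂ '' Set.Icc 0 1 ∧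
          p ∈ arc u₃ v₃ '' Set.Icc 0 1)

namespace Drawing

variable {V : Type} {G : SimpleGraph V}

lemma img_symm_aux (Γ : Drawing G) (u v : V) :
    Γ.arc u v '' Set.Icc 0 1 = Γ.arc v u '' Set.Icc 0 1 := by
  have key : ∀ a b : V, Γ.arc a b '' Set.Icc 0 1 ⊆ Γ.arc b a '' Set.Icc 0 1 := by
    rintro a b p ⟨t, ht, rfl⟩
    refine ⟨1 - t, ⟨by linarith [ht.2], by linarith [ht.1]⟩, ?_⟩
    rw [Γ.arc_symm b a (1 - t)]
    congr 1
    ring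
  exact Set.Subset.antisymm (key u v) (key v u)

/-- The image (trace) of an edge in the drawing. -/
def img (Γ : Drawing G) (e : Sym2 V) : Set (ℝ × ℝ) :=
  Sym2.lift ⟨fun u v => Γ.arc u v '' Set.Icc 0 1, fun u v => Γ.img_symm_aux u v⟩ e

/-- `p` is a crossing point of the two distinct edges `e` and `f` : it lies on
both arcs and is not the image of a vertex (so it is not a shared endpoint). -/
def Crossing (Γ : Drawing G) (e f : Sym2 V) (p : ℝ × ℝ) : Prop :=
  e ∈ G.edgeSet ∧ f ∈ G.edgeSet ∧ e ≠ f ∧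
    p ∈ Γ.img e ∧ p ∈ Γ.img f ∧ p ∉ Set.range Γ.vpos

/-- The edges `e` and `f` cross in the drawing. -/
def Crosses (Γ : Drawing G) (e f : Sym2 V) : Prop := ∃ p, Γ.Crossing e f p

/-- The set of crossing points of a drawing. -/
def crossingSet (Γ : Drawing G) : Set (ℝ × ℝ) := {p | ∃ e f, Γ.Crossing e f p}

/-- The number of crossings of a drawing. -/
def crossings (Γ : Drawing G) : ℕ := Γ.crossingSet.ncard

/-- The set of crossing points lying on a given edge. -/
def edgeCrossings (Γ : Drawing G) (e : Sym2 V) : Set (ℝ × ℝ) :=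
  {p | ∃ f, Γ.Crossing e f p}

/-- A drawing is `k`-planar if every edge is involved in at most `k` crossings. -/
def IsKPlanar (Γ : Drawing G) (k : ℕ) : Prop :=
  ∀ e ∈ G.edgeSet, (Γ.edgeCrossings e).ncard ≤ k

/-- A drawing is `k`-gap-planar if each crossing can be assigned to one of its
two involved edges such that every edge is assigned at most `k` crossings. -/
def IsKGapPlanar (Γ : Drawing G) (k : ℕ) : Prop :=
  ∃ assign : ℝ × ℝ → Sym2 V,
    (∀ p ∈ Γ.crossingSet, ∃ f, Γ.Crossing (assign p) f p) ∧
    ∀ e : Sym2 V, {p | p ∈ Γ.crossingSet ∧ assign p = e}.ncard ≤ k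

/-- A drawing is skewness-`k` if there is a set of at most `k` edges such that
every crossing involves an edge from the set. -/
def IsSkewness (Γ : Drawing G) (k : ℕ) : Prop :=
  ∃ S : Finset (Sym2 V), S.card ≤ k ∧
    ∀ p ∈ Γ.crossingSet, ∃ e ∈ S, ∃ f, Γ.Crossing e f p

/-- A drawing is `k`-apex if there is a set of at most `k` vertices such that
every crossing involves an edge incident to one of these vertices. -/
def IsKApex (Γ : Drawing G) (k : ℕ) : Prop :=
  ∃ S : Finset V, S.card ≤ k ∧
    ∀ p ∈ Γ.crossingSet, ∃ e f, Γ.Crossing e f p ∧ ∃ a ∈ S, a ∈ e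

/-- A drawing is `(k,l)`-grid-free if there is no set of `k` edges each of
which crosses each edge of some set of `l` edges. -/
def IsGridFree (Γ : Drawing G) (k l : ℕ) : Prop :=
  ¬ ∃ A B : Finset (Sym2 V), A.card = k ∧ B.card = l ∧
      ∀ e ∈ A, ∀ f ∈ B, Γ.Crosses e f

/-- A drawing is `k`-fan-crossing-free if no edge crosses `k` edges that all
share a common endpoint. -/
def IsKFanCrossingFree (Γ : Drawing G) (k : ℕ) : Prop :=
  ¬ ∃ (e : Sym2 V) (a : V) (F : Finset (Sym2 V)), F.card = k ∧
      ∀ f ∈ F, a ∈ f ∧ Γ.Crosses e f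

/-- A drawing is planarly connected if for any two crossing edges, two of
their endpoints are joined by a crossing-free edge. -/
def IsPlanarlyConnected (Γ : Drawing G) : Prop :=
  ∀ e f : Sym2 V, Γ.Crosses e f →
    ∃ a b : V, a ∈ e ∧ b ∈ f ∧ G.Adj a b ∧ Γ.edgeCrossings s(a, b) = ∅

/-- A drawing is straight-line if every edge is drawn as the line segment
between the images of its endpoints. -/
def IsStraight (Γ : Drawing G) : Prop :=
  ∀ u v : V, G.Adj u v → ∀ t ∈ Set.Icc (0:ℝ) 1,
    Γ.arc u v t = (1 - t) • Γ.vpos u + t • Γ.vpos v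

/-- A straight-line RAC drawing: straight-line and any two crossing edges are
perpendicular. -/
def IsRAC (Γ : Drawing G) : Prop :=
  Γ.IsStraight ∧
    ∀ u v w z : V, G.Adj u v → G.Adj w z → Γ.Crosses s(u, v) s(w, z) →
      (Γ.vpos v - Γ.vpos u).1 * (Γ.vpos z - Γ.vpos w).1 +
        (Γ.vpos v - Γ.vpos u).2 * (Γ.vpos z - Γ.vpos w).2 = 0

end Drawing

/-- The crossing number of `G`: the minimum number of crossings over all
drawings of `G`. -/
def crNum {V : Type} (G : SimpleGraph V) : ℕ :=
  sInf {n | ∃ Γ : Drawing G, Γ.crossings = n}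

/-- The crossing number of `G` restricted to drawings satisfying `P`. -/
def crNumRestricted {V : Type} (G : SimpleGraph V) (P : Drawing G → Prop) : ℕ :=
  sInf {n | ∃ Γ : Drawing G, P Γ ∧ Γ.crossings = n}

/-- The rectilinear crossing number of `G`. -/
def rectCrNum {V : Type} (G : SimpleGraph V) : ℕ :=
  crNumRestricted G (fun Γ => Γ.IsStraight)

/-- An ℓ₂-bundle between `x` and `y`: `P` is the set of the internal vertices
of ℓ internally disjoint paths of length two from `x` to `y`, all of whose
internal vertices have degree exactly two in `G` (here ℓ = `P.card`). -/
def IsL2Bundle {V : Type} (G : SimpleGraph V) (x y : V) (P : Finset V) : Prop :=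
  x ≠ y ∧ x ∉ P ∧ y ∉ P ∧
    ∀ p ∈ P, G.Adj x p ∧ G.Adj p y ∧ (G.neighborSet p).ncard = 2

/-- Two drawings of `G` are weakly isomorphic: there is an incidence-preserving
one-to-one correspondence of vertices and edges that preserves crossings. -/
def WeaklyIso {V : Type} {G : SimpleGraph V} (Γ Γ' : Drawing G) : Prop :=
  ∃ φ : G ≃g G, ∀ e f : Sym2 V,
    Γ.Crosses e f ↔ Γ'.Crosses (Sym2.map (fun a => φ a) e) (Sym2.map (fun a => φ a) f)

/-!
If an edge `uv` of a RAC drawing crossed two edges `ab` and `ac`, both would be perpendicular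
to `uv`, so both would lie on the line through `a` perpendicular to `uv`. That line meets the
segment `uv` in a single point, so the two crossings coincide and three edges pass through one
crossing point, which a drawing forbids.
-/

section Segment

variable {𝕜 E F : Type*} [Field 𝕜] [LinearOrder 𝕜] [IsStrictOrderedRing 𝕜]
  [AddCommGroup E] [Module 𝕜 E] [AddCommGroup F] [Module 𝕜 F]

theorem AffineMap.eq_of_mem_segment_of_eq (f : E →ᵃ[𝕜] F) {a b p : E} (hab : f a = f b)
    (hp : p ∈ segment 𝕜 a b) : f p = f a := by
  have : f p ∈ segment 𝕜 (f a) (f b) := image_segment 𝕜 f a b ▸ mem_image_of_mem f hp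
  rwa [← hab, segment_same, mem_singleton_iff] at this

theorem AffineMap.injOn_segment (f : E →ᵃ[𝕜] F) {u v : E} (huv : f u ≠ f v) :
    InjOn f (segment 𝕜 u v) := by
  rw [segment_eq_image_lineMap]
  rintro _ ⟨s, -, rfl⟩ _ ⟨t, -, rfl⟩ hst
  rw [f.apply_lineMap, f.apply_lineMap] at hst
  rw [AffineMap.lineMap_injective 𝕜 huv hst]

end Segment

/-- The Euclidean inner product `⟨d, ·⟩`; `ℝ × ℝ` itself carries the sup norm. -/
def planeDot (d : ℝ × ℝ) : ℝ × ℝ →ₗ[ℝ] ℝ :=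
  d.1 • LinearMap.fst ℝ ℝ ℝ + d.2 • LinearMap.snd ℝ ℝ ℝ

@[simp]
theorem planeDot_apply (d x : ℝ × ℝ) : planeDot d x = d.1 * x.1 + d.2 * x.2 := rfl

theorem planeDot_self_ne_zero {d : ℝ × ℝ} (hd : d ≠ 0) : planeDot d d ≠ 0 := by
  contrapose! hd
  rw [planeDot_apply] at hd
  have h1 : d.1 = 0 := by nlinarith [sq_nonneg d.1, sq_nonneg d.2]
  have h2 : d.2 = 0 := by nlinarith [sq_nonneg d.1, sq_nonneg d.2]
  exact Prod.ext h1 h2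

theorem eq_of_mem_segment_of_perp {u v a b c p q : ℝ × ℝ} (huv : u ≠ v)
    (hp : p ∈ segment ℝ u v) (hq : q ∈ segment ℝ u v)
    (hpb : p ∈ segment ℝ a b) (hqc : q ∈ segment ℝ a c)
    (hb : planeDot (v - u) (b - a) = 0) (hc : planeDot (v - u) (c - a) = 0) : p = q := by
  set f := (planeDot (v - u)).toAffineMap
  have hfuv : f u ≠ f v := fun h ↦ planeDot_self_ne_zero (sub_ne_zero.mpr huv.symm)
    ((map_sub _ v u).trans (sub_eq_zero.mpr h.symm))
  have hfab : f a = f b := (sub_eq_zero.mp ((map_sub _ b a).symm.trans hb)).symm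
  have hfac : f a = f c := (sub_eq_zero.mp ((map_sub _ c a).symm.trans hc)).symm
  refine f.injOn_segment hfuv hp hq ?_
  rw [f.eq_of_mem_segment_of_eq hfab hpb, f.eq_of_mem_segment_of_eq hfac hqc]

namespace Drawing

variable {V : Type} {G : SimpleGraph V} {Γ : Drawing G}

theorem IsStraight.img_eq_segment (hΓ : Γ.IsStraight) {u v : V} (huv : G.Adj u v) :
    Γ.img s(u, v) = segment ℝ (Γ.vpos u) (Γ.vpos v) := by
  rw [segment_eq_image]
  exact image_congr (hΓ u v huv)

theorem Crossing.eq_of_crossing {e f g : Sym2 V} {p : ℝ × ℝ} (hf : Γ.Crossing e f p)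
    (hg : Γ.Crossing e g p) : f = g := by
  by_contra hfg
  induction e using Sym2.ind with | _ u v => ?_
  induction f using Sym2.ind with | _ a b => ?_
  induction g using Sym2.ind with | _ c d => ?_
  obtain ⟨huv, hab, hef, hpe, hpf, hpv⟩ := hf
  obtain ⟨-, hcd, heg, -, hpg, -⟩ := hg
  exact Γ.no_triple_point p hpv u v a b c d huv hab hcd hef heg hfg ⟨hpe, hpf, hpg⟩

theorem IsRAC.crossing_eq_of_crossing (hΓ : Γ.IsRAC) {u v a b c : V} {p q : ℝ × ℝ}
    (hp : Γ.Crossing s(u, v) s(a, b) p) (hq : Γ.Crossing s(u, v) s(a, c) q) : p = q := by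
  have hb := hΓ.2 u v a b hp.1 hp.2.1 ⟨p, hp⟩
  have hc := hΓ.2 u v a c hq.1 hq.2.1 ⟨q, hq⟩
  obtain ⟨huv, hab, -, hpe, hpf, -⟩ := hp
  obtain ⟨-, hac, -, hqe, hqf, -⟩ := hq
  rw [hΓ.1.img_eq_segment huv] at hpe hqe
  rw [hΓ.1.img_eq_segment hab] at hpf
  rw [hΓ.1.img_eq_segment hac] at hqf
  exact eq_of_mem_segment_of_perp (fun h ↦ huv.ne (Γ.vpos_inj h)) hpe hqe hpf hqf hb hc

end Drawing

/-- Every straight-line RAC drawing is fan-crossing-free: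
in a straight-line drawing in which any two crossing edges cross at a right
angle, no edge crosses two edges sharing a common endpoint. -/
theorem rac_is_fan_crossing_free {V : Type} (G : SimpleGraph V)
    (Γ : Drawing G) (hRAC : Γ.IsRAC) :
    Γ.IsKFanCrossingFree 2 := by
  classical
  rintro ⟨e, a, F, hcard, hF⟩
  obtain ⟨f, g, hfg, rfl⟩ := Finset.card_eq_two.mp hcard
  obtain ⟨haf, p, hp⟩ := hF f (by simp)
  obtain ⟨hag, q, hq⟩ := hF g (by simp)
  induction e using Sym2.ind with | _ u v => ?_
  obtain ⟨b, rfl⟩ := Sym2.mem_iff_exists.mp haf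
  obtain ⟨c, rfl⟩ := Sym2.mem_iff_exists.mp hag
  have hpq : p = q := hRAC.crossing_eq_of_crossing hp hq
  exact hfg (hp.eq_of_crossing (hpq ▸ hq))
end
end

section
/- Let G be a graph containing an ℓ₂-bundle B between vertices u and v, and let Γ be a k-fan-crossing-free drawing of G. If ℓ ≥ 2k − 1, then no single edge of G crosses all ℓ paths of B in Γ; more precisely, an edge that crosses all ℓ paths of B crosses at least ⌈ℓ/2⌉ edges incident to u or at least ⌈ℓ/2⌉ edges incident to v, contradicting k-fan-crossing-freeness. -/
open Set

noncomputable section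

/-!
Each path `u – q – v` of the bundle that `e` crosses contributes a crossed edge `uq` at `u` or
`qv` at `v`, and distinct `q` give distinct edges, so by pigeonhole `e` crosses at least
`⌈ℓ/2⌉` edges of the fan at `u` or of the fan at `v`. In a `k`-fan-crossing-free drawing
each such fan has fewer than `k` crossed edges, and `k ≤ ⌈ℓ/2⌉` once `ℓ ≥ 2k - 1`.
-/

theorem Set.encard_lt_of_forall_finset_card_ne {α : Type*} {s : Set α} {k : ℕ}
    (h : ∀ F : Finset α, ↑F ⊆ s → F.card ≠ k) : s.encard < k := by
  by_contra! hk
  obtain ⟨t, hts, ht⟩ := Set.exists_subset_encard_eq hk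
  have htfin := Set.finite_of_encard_eq_coe ht
  refine h htfin.toFinset (by simpa using hts) ?_
  rw [htfin.encard_eq_coe_toFinset_card] at ht
  exact_mod_cast ht

namespace Drawing

variable {V : Type} {G : SimpleGraph V} {Γ : Drawing G} {e f : Sym2 V}

def crossingFan (Γ : Drawing G) (e : Sym2 V) (a : V) : Set (Sym2 V) :=
  {f | f ∈ G.edgeSet ∧ a ∈ f ∧ Γ.Crosses e f}

theorem Crosses.mem_edgeSet_right (h : Γ.Crosses e f) : f ∈ G.edgeSet :=
  let ⟨_, _, hf, _⟩ := h
  hf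

namespace IsKFanCrossingFree

variable {k : ℕ}

theorem encard_crossingFan_lt (hΓ : Γ.IsKFanCrossingFree k) (e : Sym2 V) (a : V) :
    (Γ.crossingFan e a).encard < k :=
  Set.encard_lt_of_forall_finset_card_ne fun F hF hcard =>
    hΓ ⟨e, a, F, hcard, fun _ hf => (hF hf).2⟩

theorem finite_crossingFan (hΓ : Γ.IsKFanCrossingFree k) (e : Sym2 V) (a : V) :
    (Γ.crossingFan e a).Finite :=
  Set.encard_lt_top_iff.mp ((hΓ.encard_crossingFan_lt e a).trans_le le_top)

theorem ncard_crossingFan_lt (hΓ : Γ.IsKFanCrossingFree k) (e : Sym2 V) (a : V) :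
    (Γ.crossingFan e a).ncard < k := by
  have h := hΓ.encard_crossingFan_lt e a
  rwa [← (hΓ.finite_crossingFan e a).cast_ncard_eq, Nat.cast_lt] at h

end IsKFanCrossingFree

theorem card_le_ncard_crossingFan {a : V} {Q : Finset V} (hfin : (Γ.crossingFan e a).Finite)
    (hQ : ∀ q ∈ Q, Γ.Crosses e s(a, q)) : Q.card ≤ (Γ.crossingFan e a).ncard := by
  rw [← Set.ncard_coe_finset]
  refine Set.ncard_le_ncard_of_injOn (fun q => s(a, q)) (fun q hq => ?_)
    (fun _ _ _ _ h => Sym2.congr_right.mp h) hfin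
  exact ⟨(hQ q hq).mem_edgeSet_right, Sym2.mem_mk_left a q, hQ q hq⟩

theorem half_card_le_ncard_crossingFan_or {u v : V} {P : Finset V}
    (hu : (Γ.crossingFan e u).Finite) (hv : (Γ.crossingFan e v).Finite)
    (hP : ∀ q ∈ P, Γ.Crosses e s(u, q) ∨ Γ.Crosses e s(q, v)) :
    (P.card + 1) / 2 ≤ (Γ.crossingFan e u).ncard ∨
      (P.card + 1) / 2 ≤ (Γ.crossingFan e v).ncard := by
  classical
  set Pu := P.filter fun q => Γ.Crosses e s(u, q)
  set Pv := P.filter fun q => ¬Γ.Crosses e s(u, q)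
  have hsplit : Pu.card + Pv.card = P.card := Finset.card_filter_add_card_filter_not _
  have hPu : Pu.card ≤ (Γ.crossingFan e u).ncard :=
    card_le_ncard_crossingFan hu fun q hq => (Finset.mem_filter.mp hq).2
  have hPv : Pv.card ≤ (Γ.crossingFan e v).ncard :=
    card_le_ncard_crossingFan hv fun q hq => by
      obtain ⟨hqP, hnu⟩ := Finset.mem_filter.mp hq
      exact Sym2.eq_swap ▸ (hP q hqP).resolve_left hnu
  omega

end Drawing

theorem no_edge_crosses_whole_bundle_general {V : Type} (G : SimpleGraph V) (k ℓ : ℕ)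
    (u v : V) (P : Finset V) (hcard : P.card = ℓ)
    (Γ : Drawing G) (hΓ : Γ.IsKFanCrossingFree k) :
    (∀ e : Sym2 V, e ∈ G.edgeSet →
      (∀ q ∈ P, Γ.Crosses e s(u, q) ∨ Γ.Crosses e s(q, v)) →
      ((ℓ + 1) / 2 ≤ {f : Sym2 V | f ∈ G.edgeSet ∧ u ∈ f ∧ Γ.Crosses e f}.ncard ∨
        (ℓ + 1) / 2 ≤ {f : Sym2 V | f ∈ G.edgeSet ∧ v ∈ f ∧ Γ.Crosses e f}.ncard)) ∧
    (2 * k - 1 ≤ ℓ →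
      ¬ ∃ e : Sym2 V, e ∈ G.edgeSet ∧
          ∀ q ∈ P, Γ.Crosses e s(u, q) ∨ Γ.Crosses e s(q, v)) := by
  subst hcard
  have half : ∀ e : Sym2 V, (∀ q ∈ P, Γ.Crosses e s(u, q) ∨ Γ.Crosses e s(q, v)) →
      (P.card + 1) / 2 ≤ (Γ.crossingFan e u).ncard ∨
        (P.card + 1) / 2 ≤ (Γ.crossingFan e v).ncard := fun e =>
    Drawing.half_card_le_ncard_crossingFan_or (hΓ.finite_crossingFan e u)
      (hΓ.finite_crossingFan e v)
  refine ⟨fun e _ => half e, ?_⟩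
  rintro hk ⟨e, -, hP⟩
  have hu := hΓ.ncard_crossingFan_lt e u
  have hv := hΓ.ncard_crossingFan_lt e v
  rcases half e hP with h | h <;> omega

/-- Let `B` be an ℓ₂-bundle between `u` and `v` in `G` and
let `Γ` be a `k`-fan-crossing-free drawing of `G`. Any edge that crosses all
`ℓ` paths of `B` crosses at least `⌈ℓ/2⌉` edges incident to `u` or at least
`⌈ℓ/2⌉` edges incident to `v`; in particular if `ℓ ≥ 2k - 1` then no single
edge of `G` crosses all `ℓ` paths of `B` in `Γ`. -/
theorem no_edge_crosses_whole_bundle {V : Type} (G : SimpleGraph V) (k ℓ : ℕ)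
    (u v : V) (P : Finset V) (hB : IsL2Bundle G u v P) (hcard : P.card = ℓ)
    (Γ : Drawing G) (hΓ : Γ.IsKFanCrossingFree k) :
    (∀ e : Sym2 V, e ∈ G.edgeSet →
      (∀ q ∈ P, Γ.Crosses e s(u, q) ∨ Γ.Crosses e s(q, v)) →
      ((ℓ + 1) / 2 ≤ {f : Sym2 V | f ∈ G.edgeSet ∧ u ∈ f ∧ Γ.Crosses e f}.ncard ∨
        (ℓ + 1) / 2 ≤ {f : Sym2 V | f ∈ G.edgeSet ∧ v ∈ f ∧ Γ.Crosses e f}.ncard)) ∧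
    (2 * k - 1 ≤ ℓ →
      ¬ ∃ e : Sym2 V, e ∈ G.edgeSet ∧
          ∀ q ∈ P, Γ.Crosses e s(u, q) ∨ Γ.Crosses e s(q, v)) :=
  no_edge_crosses_whole_bundle_general G k ℓ u v P hcard Γ hΓ
end
end
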